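/- Let (ũ_k)_{k≥0} be the Lehmer sequence associated to ζ and η, and assume c₂ is odd. Then for every integer k ≥ 2, ρ(2^k) = 2^{max(k − ν₂(ũ_{ρ(4)}), 0)}·ρ(4). -/

import Mathlib

/-!
Let `v` be the companion sequence: `v n = ζⁿ + ηⁿ`, divided by `ζ + η` when `n` is odd. Then
`ũ_{2n} = ũ_n v_n`, and `c₁^[n odd] v_n² = c₁^[n even] (c₁ - 4c₂) ũ_n² + 4c₂ⁿ` forces
`ν₂(v_n) = 1` as soon as `4 ∣ ũ_n` (for odd `n`, `c₁` is then odd, because for even `c₁` the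
recurrence makes every odd-indexed term odd). So once `4 ∣ ũ_m`, doubling the index raises `ν₂` by
one, while passing to an odd multiple of the index keeps it (by
`2ũ_{a+2m} = ũ_a v_{2m} + c₁^[a odd] v_a ũ_{2m}`); thus `ν₂(ũ_{m 2ˢ t}) = ν₂(ũ_m) + s` for odd `t`.
The identity `2c₂ᵇ ũ_a = c₁^[a, b odd] v_b ũ_{a+b} - c₁^[a odd, b even] v_{a+b} ũ_b` makes the
indices `n` with `4 ∣ ũ_n` closed under subtraction, so they are the multiples of `ρ(4)`. Hence for
`k ≥ 2`, `2ᵏ ∣ ũ_n` exactly when `ρ(4) 2^(k - ν₂(ũ_{ρ(4)})) ∣ n`.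
-/

section padicValInt

variable {p : ℕ} [hp : Fact p.Prime] {x y : ℤ}

theorem pow_dvd_iff_le_padicValInt (hx : x ≠ 0) {k : ℕ} :
    (p : ℤ) ^ k ∣ x ↔ k ≤ padicValInt p x := by
  simp [padicValInt_dvd_iff, hx]

theorem padicValInt_pow_mul (hx : x ≠ 0) (k : ℕ) :
    padicValInt p ((p : ℤ) ^ k * x) = k + padicValInt p x := by
  have hp0 : (p : ℤ) ^ k ≠ 0 := pow_ne_zero _ (by exact_mod_cast hp.out.ne_zero)
  rw [padicValInt.mul hp0 hx, ← Nat.cast_pow, padicValInt.of_nat, padicValNat.prime_pow]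

theorem padicValInt_add_of_pow_dvd (hx : x ≠ 0) (hy : (p : ℤ) ^ (padicValInt p x + 1) ∣ y) :
    padicValInt p (x + y) = padicValInt p x := by
  have hx' : ¬ (p : ℤ) ^ (padicValInt p x + 1) ∣ x := by
    rw [pow_dvd_iff_le_padicValInt hx]; omega
  have hxy : x + y ≠ 0 := fun h => hx' ((dvd_add_left hy).1 (h ▸ dvd_zero _))
  apply le_antisymm
  · by_contra! h
    exact hx' (by simpa using dvd_sub ((pow_dvd_iff_le_padicValInt hxy).2 h) hy)
  · rw [← pow_dvd_iff_le_padicValInt hxy]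
    exact dvd_add (padicValInt_dvd x) ((pow_dvd_pow _ (Nat.le_succ _)).trans hy)

end padicValInt

theorem four_dvd_iff_two_le_padicValInt {x : ℤ} (hx : x ≠ 0) : 4 ∣ x ↔ 2 ≤ padicValInt 2 x :=
  pow_dvd_iff_le_padicValInt (p := 2) (k := 2) hx

theorem padicValInt_two_eq_zero_of_odd {x : ℤ} (hx : Odd x) : padicValInt 2 x = 0 :=
  padicValInt.eq_zero_of_not_dvd (by simpa [← even_iff_two_dvd] using hx)

def IsLehmerSeq (ζ η : ℂ) (u : ℕ → ℤ) : Prop :=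
  ∀ n, (u n : ℂ) = if Odd n then (ζ ^ n - η ^ n) / (ζ - η) else (ζ ^ n - η ^ n) / (ζ ^ 2 - η ^ 2)

def IsLehmerCompanion (ζ η : ℂ) (v : ℕ → ℤ) : Prop :=
  ∀ n, (v n : ℂ) = if Odd n then (ζ ^ n + η ^ n) / (ζ + η) else ζ ^ n + η ^ n

section Identities

variable {ζ η : ℂ} {c₁ c₂ : ℤ} {u v : ℕ → ℤ} {n : ℕ}

theorem sq_sub_sq_ne_zero (hadd : ζ + η ≠ 0) (hsub : ζ - η ≠ 0) : ζ ^ 2 - η ^ 2 ≠ 0 := by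
  rw [sq_sub_sq]; exact mul_ne_zero hadd hsub

namespace IsLehmerCompanion

theorem cast_of_odd (hv : IsLehmerCompanion ζ η v) (hn : Odd n) :
    (v n : ℂ) = (ζ ^ n + η ^ n) / (ζ + η) := by
  rw [hv n, if_pos hn]

theorem cast_of_even (hv : IsLehmerCompanion ζ η v) (hn : Even n) :
    (v n : ℂ) = ζ ^ n + η ^ n := by
  rw [hv n, if_neg (Nat.not_odd_iff_even.2 hn)]

end IsLehmerCompanion

namespace IsLehmerSeq

theorem cast_of_odd (hu : IsLehmerSeq ζ η u) (hn : Odd n) :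
    (u n : ℂ) = (ζ ^ n - η ^ n) / (ζ - η) := by
  rw [hu n, if_pos hn]

theorem cast_of_even (hu : IsLehmerSeq ζ η u) (hn : Even n) :
    (u n : ℂ) = (ζ ^ n - η ^ n) / (ζ ^ 2 - η ^ 2) := by
  rw [hu n, if_neg (Nat.not_odd_iff_even.2 hn)]

theorem one (hsub : ζ - η ≠ 0) (hu : IsLehmerSeq ζ η u) : u 1 = 1 := by
  have h := hu.cast_of_odd odd_one
  rw [pow_one, pow_one, div_self hsub] at h
  exact_mod_cast h

theorem ne_zero (hadd : ζ + η ≠ 0) (hsub : ζ - η ≠ 0) (hu : IsLehmerSeq ζ η u)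
    (hn : ζ ^ n ≠ η ^ n) : u n ≠ 0 := by
  rw [← Int.cast_ne_zero (α := ℂ), hu n]
  split_ifs
  · exact div_ne_zero (sub_ne_zero.2 hn) hsub
  · exact div_ne_zero (sub_ne_zero.2 hn) (sq_sub_sq_ne_zero hadd hsub)

theorem add_two_of_odd (hadd : ζ + η ≠ 0) (hsub : ζ - η ≠ 0) (hu : IsLehmerSeq ζ η u)
    (hc₁ : (c₁ : ℂ) = (ζ + η) ^ 2) (hc₂ : (c₂ : ℂ) = ζ * η) (hn : Odd n) :
    u (n + 2) = c₁ * u (n + 1) - c₂ * u n := by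
  have := sq_sub_sq_ne_zero hadd hsub
  apply Int.cast_injective (α := ℂ)
  push_cast
  rw [hu.cast_of_odd hn, hu.cast_of_even hn.add_one, hu.cast_of_odd (hn.add_even even_two),
    hc₁, hc₂]
  field_simp
  ring

theorem exists_companion (hadd : ζ + η ≠ 0) (hsub : ζ - η ≠ 0) (hu : IsLehmerSeq ζ η u)
    (hc₁ : (c₁ : ℂ) = (ζ + η) ^ 2) : ∃ v, IsLehmerCompanion ζ η v := by
  have := sq_sub_sq_ne_zero hadd hsub
  refine ⟨fun n => 2 * u (n + 1) - (if Odd n then 1 else c₁) * u n, fun n => ?_⟩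
  push_cast
  rcases Nat.even_or_odd n with hn | hn
  · rw [if_neg (Nat.not_odd_iff_even.2 hn), if_neg (Nat.not_odd_iff_even.2 hn),
      hu.cast_of_odd hn.add_one, hu.cast_of_even hn, hc₁]
    field_simp
    ring
  · rw [if_pos hn, if_pos hn, hu.cast_of_even hn.add_one, hu.cast_of_odd hn]
    field_simp
    ring

theorem two_mul (hadd : ζ + η ≠ 0) (hsub : ζ - η ≠ 0) (hu : IsLehmerSeq ζ η u)
    (hv : IsLehmerCompanion ζ η v) (n : ℕ) : u (2 * n) = u n * v n := by
  have := sq_sub_sq_ne_zero hadd hsub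
  apply Int.cast_injective (α := ℂ)
  push_cast
  rw [hu.cast_of_even (even_two_mul n)]
  rcases Nat.even_or_odd n with hn | hn
  · rw [hu.cast_of_even hn, hv.cast_of_even hn]
    field_simp
    ring
  · rw [hu.cast_of_odd hn, hv.cast_of_odd hn]
    field_simp
    ring

theorem two_mul_add_eq_of_even (hadd : ζ + η ≠ 0) (hsub : ζ - η ≠ 0) (hu : IsLehmerSeq ζ η u)
    (hv : IsLehmerCompanion ζ η v) (hc₁ : (c₁ : ℂ) = (ζ + η) ^ 2) (a : ℕ) {b : ℕ}
    (hb : Even b) : 2 * u (a + b) = u a * v b + (if Odd a then c₁ else 1) * v a * u b := by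
  have := sq_sub_sq_ne_zero hadd hsub
  apply Int.cast_injective (α := ℂ)
  push_cast
  rw [hu.cast_of_even hb, hv.cast_of_even hb]
  rcases Nat.even_or_odd a with ha | ha
  · rw [if_neg (Nat.not_odd_iff_even.2 ha), hu.cast_of_even ha, hv.cast_of_even ha,
      hu.cast_of_even (ha.add hb)]
    field_simp
    ring
  · rw [if_pos ha, hu.cast_of_odd ha, hv.cast_of_odd ha, hu.cast_of_odd (ha.add_even hb), hc₁]
    field_simp
    ring

theorem companion_sq (hadd : ζ + η ≠ 0) (hsub : ζ - η ≠ 0) (hu : IsLehmerSeq ζ η u)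
    (hv : IsLehmerCompanion ζ η v) (hc₁ : (c₁ : ℂ) = (ζ + η) ^ 2) (hc₂ : (c₂ : ℂ) = ζ * η)
    (n : ℕ) : (if Odd n then c₁ else 1) * v n ^ 2 =
      (if Odd n then 1 else c₁) * (c₁ - 4 * c₂) * u n ^ 2 + 4 * c₂ ^ n := by
  have := sq_sub_sq_ne_zero hadd hsub
  apply Int.cast_injective (α := ℂ)
  rcases Nat.even_or_odd n with hn | hn
  · rw [if_neg (Nat.not_odd_iff_even.2 hn), if_neg (Nat.not_odd_iff_even.2 hn)]
    push_cast
    rw [hu.cast_of_even hn, hv.cast_of_even hn, hc₁, hc₂]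
    field_simp
    ring
  · rw [if_pos hn, if_pos hn]
    push_cast
    rw [hu.cast_of_odd hn, hv.cast_of_odd hn, hc₁, hc₂]
    field_simp
    ring

theorem two_mul_pow_mul_eq (hadd : ζ + η ≠ 0) (hsub : ζ - η ≠ 0) (hu : IsLehmerSeq ζ η u)
    (hv : IsLehmerCompanion ζ η v) (hc₁ : (c₁ : ℂ) = (ζ + η) ^ 2) (hc₂ : (c₂ : ℂ) = ζ * η)
    (a b : ℕ) : 2 * c₂ ^ b * u a = (if Odd a ∧ Odd b then c₁ else 1) * v b * u (a + b) -
      (if Odd a ∧ Even b then c₁ else 1) * v (a + b) * u b := by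
  have := sq_sub_sq_ne_zero hadd hsub
  apply Int.cast_injective (α := ℂ)
  rcases Nat.even_or_odd a with ha | ha <;> rcases Nat.even_or_odd b with hb | hb
  · rw [if_neg fun h => Nat.not_odd_iff_even.2 ha h.1,
      if_neg fun h => Nat.not_odd_iff_even.2 ha h.1]
    push_cast
    rw [hu.cast_of_even ha, hu.cast_of_even hb, hu.cast_of_even (ha.add hb), hv.cast_of_even hb,
      hv.cast_of_even (ha.add hb), hc₂]
    field_simp
    ring
  · rw [if_neg fun h => Nat.not_odd_iff_even.2 ha h.1,
      if_neg fun h => Nat.not_odd_iff_even.2 ha h.1]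
    push_cast
    rw [hu.cast_of_even ha, hu.cast_of_odd hb, hu.cast_of_odd (ha.add_odd hb), hv.cast_of_odd hb,
      hv.cast_of_odd (ha.add_odd hb), hc₂]
    field_simp
    ring
  · rw [if_neg fun h => Nat.not_odd_iff_even.2 hb h.2, if_pos ⟨ha, hb⟩]
    push_cast
    rw [hu.cast_of_odd ha, hu.cast_of_even hb, hu.cast_of_odd (ha.add_even hb), hv.cast_of_even hb,
      hv.cast_of_odd (ha.add_even hb), hc₁, hc₂]
    field_simp
    ring
  · rw [if_pos ⟨ha, hb⟩, if_neg fun h => Nat.not_even_iff_odd.2 hb h.2]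
    push_cast
    rw [hu.cast_of_odd ha, hu.cast_of_odd hb, hu.cast_of_even (ha.add_odd hb), hv.cast_of_odd hb,
      hv.cast_of_even (ha.add_odd hb), hc₁, hc₂]
    field_simp
    ring

end IsLehmerSeq

end Identities

structure LehmerData (ζ η : ℂ) (c₁ c₂ : ℤ) (u v : ℕ → ℤ) : Prop where
  add_ne_zero : ζ + η ≠ 0
  sub_ne_zero : ζ - η ≠ 0
  sq_add : (c₁ : ℂ) = (ζ + η) ^ 2
  mul : (c₂ : ℂ) = ζ * η
  seq : IsLehmerSeq ζ η u
  companion : IsLehmerCompanion ζ η v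

namespace LehmerData

variable {ζ η : ℂ} {c₁ c₂ : ℤ} {u v : ℕ → ℤ} (h : LehmerData ζ η c₁ c₂ u v) (hodd : Odd c₂)
include h hodd

theorem odd_seq_of_odd (hc₁ : Even c₁) {n : ℕ} (hn : Odd n) : Odd (u n) := by
  obtain ⟨i, rfl⟩ := hn
  induction i with
  | zero => simp [h.seq.one h.sub_ne_zero]
  | succ i ih =>
    rw [show 2 * (i + 1) + 1 = 2 * i + 1 + 2 by ring,
      h.seq.add_two_of_odd h.add_ne_zero h.sub_ne_zero h.sq_add h.mul ⟨i, rfl⟩]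
    exact (hc₁.mul_right _).sub_odd (hodd.mul ih)

theorem padicValInt_companion {n : ℕ} (h4 : 4 ∣ u n) : padicValInt 2 (v n) = 1 := by
  have hE := h.seq.companion_sq h.add_ne_zero h.sub_ne_zero h.companion h.sq_add h.mul n
  have hA : Odd (if Odd n then c₁ else 1) := by
    by_cases hn : Odd n
    · rw [if_pos hn, ← Int.not_even_iff_odd]
      intro hc₁
      exact Int.not_even_iff_odd.2 (h.odd_seq_of_odd hodd hc₁ hn)
        (even_iff_two_dvd.2 ((by norm_num : (2 : ℤ) ∣ 4).trans h4))
    · rw [if_neg hn]; exact odd_one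
  have h4c : padicValInt 2 (4 * c₂ ^ n) = 2 := by
    rw [show (4 : ℤ) = ((2 : ℕ) : ℤ) ^ 2 by norm_num,
      padicValInt_pow_mul (pow_ne_zero _ (by rintro rfl; simp at hodd)),
      padicValInt_two_eq_zero_of_odd hodd.pow]
  have hval : padicValInt 2 ((if Odd n then c₁ else 1) * v n ^ 2) = 2 := by
    rw [hE, add_comm, padicValInt_add_of_pow_dvd (fun h0 => by simp [h0] at h4c), h4c]
    obtain ⟨w, hw⟩ := h4
    rw [h4c, hw]
    exact Dvd.intro (2 * (if Odd n then 1 else c₁) * (c₁ - 4 * c₂) * w ^ 2) (by push_cast; ring)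
  have hv : v n ≠ 0 := by rintro h0; simp [h0] at hval
  rw [padicValInt.mul (fun h0 => by simp [h0] at hA) (pow_ne_zero _ hv), pow_two,
    padicValInt.mul hv hv, padicValInt_two_eq_zero_of_odd hA] at hval
  omega

theorem two_dvd_companion {n : ℕ} (h4 : 4 ∣ u n) : 2 ∣ v n := by
  simpa [h.padicValInt_companion hodd h4] using padicValInt_dvd (p := 2) (v n)

theorem four_dvd_of_four_dvd_add {a b : ℕ} (hb : 4 ∣ u b) (hab : 4 ∣ u (a + b)) : 4 ∣ u a := by
  have hE := h.seq.two_mul_pow_mul_eq h.add_ne_zero h.sub_ne_zero h.companion h.sq_add h.mul a b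
  have h8 : 2 * 4 ∣ 2 * (c₂ ^ b * u a) := by
    rw [← mul_assoc, hE]
    exact dvd_sub
      (mul_dvd_mul (dvd_mul_of_dvd_right (h.two_dvd_companion hodd hb) _) hab)
      (mul_dvd_mul (dvd_mul_of_dvd_right (h.two_dvd_companion hodd hab) _) hb)
  have hc : IsCoprime (4 : ℤ) (c₂ ^ b) := by
    simpa using (Int.isCoprime_two_left.2 hodd).pow (m := 2) (n := b)
  exact hc.dvd_of_dvd_mul_left ((mul_dvd_mul_iff_left two_ne_zero).1 h8)

theorem dvd_of_four_dvd {r : ℕ} (hr0 : 0 < r) (hr : 4 ∣ u r)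
    (hmin : ∀ n, 0 < n → 4 ∣ u n → r ≤ n) (n : ℕ) (hn : 4 ∣ u n) : r ∣ n := by
  induction n using Nat.strong_induction_on with
  | _ n ih =>
    rcases Nat.eq_zero_or_pos n with rfl | hn0
    · exact dvd_zero r
    obtain ⟨m, rfl⟩ := Nat.exists_eq_add_of_le (hmin n hn0 hn)
    have hm : 4 ∣ u m := h.four_dvd_of_four_dvd_add hodd hr (by rwa [add_comm])
    exact (Nat.dvd_add_right dvd_rfl).2 (ih m (by omega) hm)

theorem padicValInt_two_mul {n : ℕ} (hn : u n ≠ 0) (h4 : 4 ∣ u n) :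
    padicValInt 2 (u (2 * n)) = padicValInt 2 (u n) + 1 := by
  have hv := h.padicValInt_companion hodd h4
  rw [h.seq.two_mul h.add_ne_zero h.sub_ne_zero h.companion,
    padicValInt.mul hn (fun h0 => by simp [h0] at hv), hv]

theorem padicValInt_odd_mul (hu0 : ∀ n, 0 < n → u n ≠ 0) {m : ℕ} (hm : 0 < m) (h4 : 4 ∣ u m)
    {t : ℕ} (ht : Odd t) : padicValInt 2 (u (t * m)) = padicValInt 2 (u m) := by
  obtain ⟨i, rfl⟩ := ht
  induction i with
  | zero => simp
  | succ i ih =>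
    have hν := (four_dvd_iff_two_le_padicValInt (hu0 m hm)).1 h4
    have h2m := h.padicValInt_two_mul hodd (hu0 m hm) h4
    have h4a : 4 ∣ u ((2 * i + 1) * m) :=
      (four_dvd_iff_two_le_padicValInt (hu0 _ (by positivity))).2 (ih ▸ hν)
    have h4b : 4 ∣ u (2 * m) :=
      (four_dvd_iff_two_le_padicValInt (hu0 (2 * m) (by omega))).2 (by omega)
    have hE := h.seq.two_mul_add_eq_of_even h.add_ne_zero h.sub_ne_zero h.companion h.sq_add
      ((2 * i + 1) * m) (even_two_mul m)
    rw [show (2 * i + 1) * m + 2 * m = (2 * (i + 1) + 1) * m by ring] at hE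
    have hv := h.padicValInt_companion hodd h4b
    have ha0 : u ((2 * i + 1) * m) ≠ 0 := hu0 _ (by positivity)
    have hprod : padicValInt 2 (u ((2 * i + 1) * m) * v (2 * m)) = padicValInt 2 (u m) + 1 := by
      rw [padicValInt.mul ha0 (fun h0 => by simp [h0] at hv), ih, hv]
    have hdvd : (2 : ℤ) ^ (padicValInt 2 (u ((2 * i + 1) * m) * v (2 * m)) + 1) ∣
        (if Odd ((2 * i + 1) * m) then c₁ else 1) * v ((2 * i + 1) * m) * u (2 * m) := by
      rw [hprod, pow_succ', ← h2m]
      exact mul_dvd_mul (dvd_mul_of_dvd_right (h.two_dvd_companion hodd h4a) _) (padicValInt_dvd _)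
    have key : padicValInt 2 (u ((2 * (i + 1) + 1) * m) * 2) = padicValInt 2 (u m) + 1 := by
      rw [mul_comm, hE, padicValInt_add_of_pow_dvd (fun h0 => by simp [h0] at hprod) hdvd, hprod]
    have hsucc := padicValInt_mul_eq_succ (p := 2) _ (hu0 ((2 * (i + 1) + 1) * m) (by positivity))
    rw [Nat.cast_ofNat, key] at hsucc
    omega

theorem padicValInt_mul_two_pow_mul (hu0 : ∀ n, 0 < n → u n ≠ 0) {m : ℕ} (hm : 0 < m)
    (h4 : 4 ∣ u m) {t : ℕ} (ht : Odd t) (s : ℕ) :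
    padicValInt 2 (u (m * (2 ^ s * t))) = padicValInt 2 (u m) + s := by
  induction s with
  | zero => rw [pow_zero, one_mul, mul_comm, h.padicValInt_odd_mul hodd hu0 hm h4 ht, add_zero]
  | succ s ih =>
    have hpos : 0 < m * (2 ^ s * t) := by have := ht.pos; positivity
    have hν := (four_dvd_iff_two_le_padicValInt (hu0 m hm)).1 h4
    have h4' := (four_dvd_iff_two_le_padicValInt (hu0 _ hpos)).2 (by omega)
    rw [show m * (2 ^ (s + 1) * t) = 2 * (m * (2 ^ s * t)) by ring,
      h.padicValInt_two_mul hodd (hu0 _ hpos) h4', ih, add_assoc]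

theorem two_pow_dvd_iff (hu0 : ∀ n, 0 < n → u n ≠ 0) {r : ℕ} (hr0 : 0 < r) (hr : 4 ∣ u r)
    (hmin : ∀ n, 0 < n → 4 ∣ u n → r ≤ n) {k : ℕ} (hk : 2 ≤ k) {n : ℕ} (hn : 0 < n) :
    (2 : ℤ) ^ k ∣ u n ↔ r * 2 ^ (k - padicValInt 2 (u r)) ∣ n := by
  constructor
  · intro hdvd
    obtain ⟨c, rfl⟩ := h.dvd_of_four_dvd hodd hr0 hr hmin n ((pow_dvd_pow 2 hk).trans hdvd)
    obtain ⟨s, t, ht, rfl⟩ := Nat.exists_eq_two_pow_mul_odd (n := c) (by rintro rfl; simp at hn)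
    have hval := h.padicValInt_mul_two_pow_mul hodd hu0 hr0 hr ht s
    have hks := (pow_dvd_iff_le_padicValInt (p := 2) (hu0 _ hn)).1 hdvd
    exact mul_dvd_mul_left r (dvd_mul_of_dvd_left (pow_dvd_pow 2 (by omega)) t)
  · rintro ⟨c, rfl⟩
    obtain ⟨s, t, ht, rfl⟩ := Nat.exists_eq_two_pow_mul_odd (n := c) (by rintro rfl; simp at hn)
    rw [show r * 2 ^ (k - padicValInt 2 (u r)) * (2 ^ s * t) =
      r * (2 ^ (k - padicValInt 2 (u r) + s) * t) by ring] at hn ⊢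
    apply (pow_dvd_iff_le_padicValInt (p := 2) (hu0 _ hn)).2
    rw [h.padicValInt_mul_two_pow_mul hodd hu0 hr0 hr ht]
    omega

end LehmerData

theorem least_eq_of_forall_dvd_iff {P : ℕ → Prop} {r d : ℕ} (hd : 0 < d)
    (hP : ∀ n, 0 < n → (P n ↔ d ∣ n)) (hr : 0 < r ∧ P r ∧ ∀ n, 0 < n → P n → r ≤ n) : r = d :=
  le_antisymm (hr.2.2 d hd ((hP d hd).2 dvd_rfl)) (Nat.le_of_dvd hr.1 ((hP r hr.1).1 hr.2.1))

theorem Int.gcd_two_pow_eq_one_of_odd {c : ℤ} (hc : Odd c) (k : ℕ) :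
    Int.gcd ((2 ^ k : ℕ) : ℤ) c = 1 :=
  Int.isCoprime_iff_gcd_eq_one.1 (by simpa using (Int.isCoprime_two_left.2 hc).pow_left (m := k))

theorem stmt_6_general
    (ζ η : ℂ) (c₁ c₂ : ℤ)
    (hc₁ : (c₁ : ℂ) = (ζ + η) ^ 2) (hc₂ : (c₂ : ℂ) = ζ * η)
    (hru : ∀ k : ℕ, 0 < k → (ζ / η) ^ k ≠ 1)
    (u : ℕ → ℤ)
    (hu : ∀ k : ℕ, (u k : ℂ) =
      if Odd k then (ζ ^ k - η ^ k) / (ζ - η) else (ζ ^ k - η ^ k) / (ζ ^ 2 - η ^ 2))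
    (ρ : ℕ → ℕ)
    (hρ : ∀ m : ℕ, 0 < m → Int.gcd (m : ℤ) c₂ = 1 →
      0 < ρ m ∧ (m : ℤ) ∣ u (ρ m) ∧ ∀ k : ℕ, 0 < k → (m : ℤ) ∣ u k → ρ m ≤ k)
    (hodd : Odd c₂) :
    ∀ k : ℕ, 2 ≤ k →
      ρ (2 ^ k) = 2 ^ (k - padicValInt 2 (u (ρ 4))) * ρ 4 := by
  have hη : η ≠ 0 := by
    rintro rfl
    have hc₂0 : c₂ = 0 := by exact_mod_cast hc₂.trans (mul_zero ζ)
    simp [hc₂0] at hodd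
  have hpow : ∀ n, 0 < n → ζ ^ n ≠ η ^ n := fun n hn heq =>
    hru n hn (by rw [div_pow, heq, div_self (pow_ne_zero _ hη)])
  have hsub : ζ - η ≠ 0 := sub_ne_zero.2 (by simpa using hpow 1 one_pos)
  have hadd : ζ + η ≠ 0 := fun h0 => hpow 2 two_pos (by rw [eq_neg_of_add_eq_zero_left h0]; ring)
  obtain ⟨v, hv⟩ := IsLehmerSeq.exists_companion hadd hsub hu hc₁
  have h : LehmerData ζ η c₁ c₂ u v := ⟨hadd, hsub, hc₁, hc₂, hu, hv⟩
  have hu0 : ∀ n, 0 < n → u n ≠ 0 := fun n hn => IsLehmerSeq.ne_zero hadd hsub hu (hpow n hn)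
  obtain ⟨hr0, hr4, hmin⟩ := hρ 4 four_pos (Int.gcd_two_pow_eq_one_of_odd hodd 2)
  have hmin4 : ∀ n, 0 < n → 4 ∣ u n → ρ 4 ≤ n := fun n hn h4 => hmin n hn (by exact_mod_cast h4)
  intro k hk
  refine least_eq_of_forall_dvd_iff (P := fun n => ((2 ^ k : ℕ) : ℤ) ∣ u n) (by positivity)
    (fun n hn => ?_) (hρ (2 ^ k) (by positivity) (Int.gcd_two_pow_eq_one_of_odd hodd k))
  rw [mul_comm, ← h.two_pow_dvd_iff hodd hu0 hr0 hr4 hmin4 hk hn, Nat.cast_pow, Nat.cast_ofNat]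

/-- If `c₂` is odd then for every integer `k ≥ 2`,
`ρ(2^k) = 2^(max(k − ν₂(ũ_{ρ(4)}), 0)) · ρ(4)`. -/
theorem stmt_6
    (ζ η : ℂ) (c₁ c₂ : ℤ)
    (hc₁ : (c₁ : ℂ) = (ζ + η) ^ 2) (hc₂ : (c₂ : ℂ) = ζ * η)
    (hc₁0 : c₁ ≠ 0) (hc₂0 : c₂ ≠ 0) (hcop : IsCoprime c₁ c₂)
    (habs : ‖η‖ ≤ ‖ζ‖)
    (hru : ∀ k : ℕ, 0 < k → (ζ / η) ^ k ≠ 1)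
    (u : ℕ → ℤ)
    (hu : ∀ k : ℕ, (u k : ℂ) =
      if Odd k then (ζ ^ k - η ^ k) / (ζ - η) else (ζ ^ k - η ^ k) / (ζ ^ 2 - η ^ 2))
    (ρ : ℕ → ℕ)
    (hρ : ∀ m : ℕ, 0 < m → Int.gcd (m : ℤ) c₂ = 1 →
      0 < ρ m ∧ (m : ℤ) ∣ u (ρ m) ∧ ∀ k : ℕ, 0 < k → (m : ℤ) ∣ u k → ρ m ≤ k)
    (hodd : Odd c₂) :
    ∀ k : ℕ, 2 ≤ k →
      ρ (2 ^ k) = 2 ^ (k - padicValInt 2 (u (ρ 4))) * ρ 4 :=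
  stmt_6_general ζ η c₁ c₂ hc₁ hc₂ hru u hu ρ hρ hodd
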